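/- (Truncated V-fractional variation of constants, general case.) Let n ≥ 1 be an integer, let r_1, …, r_n : (0,∞) → ℝ be continuous, and define the operator L by Ly = D_α^n y + ∑_{j=1}^n r_j · D_α^{n−j} y. Fix s > 0 and suppose yC : (0,∞) × (0,∞) → ℝ is such that for each fixed σ > 0 the function t ↦ yC(t,σ) is n times α-differentiable with L(yC(·,σ)) = 0 on (0,∞), D_α^j yC(σ,σ) = 0 for 0 ≤ j ≤ n−2 and D_α^{n−1} yC(σ,σ) = 1 (derivatives taken in the first variable), and suppose (t,σ) ↦ D_α^j yC(t,σ) is jointly continuous for every 0 ≤ j ≤ n. Then for every continuous f : (0,∞) → ℝ, the function y(t) = ∫_s^t yC(t,τ) f(τ) dωτ satisfies Ly(t) = f(t) for all t > 0 and D_α^j y(s) = 0 for every 0 ≤ j ≤ n−1. -/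

import Mathlib

/-!
Differentiating `y t = λ⁻¹ ∫_s^t yC(t,τ) f(τ) τ^(α-1) dτ` under the integral sign (Leibniz rule with
variable upper limit), each application of `D_α` adds the boundary term `D_α^j yC(t,t) f(t)`, the
factor `t^(1-α) t^(α-1)` cancelling. By the initial conditions on `yC` this term vanishes for
`j ≤ n - 2` and equals `f t` for `j = n - 1`, so `D_α^j y` is the integral of `D_α^j yC(t,·) f` for
`j < n`, and `D_α^n y = f + ∫ D_α^n yC(t,·) f dω`. Hence `L y t - f t` is the integral of
`L(yC(·,τ))(t) f(τ) = 0`, and `D_α^j y s` is an integral over `[s, s]`.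
-/

open Real Set MeasureTheory Filter

noncomputable def poch (x y : ℝ) : ℝ := Real.Gamma (x + y) / Real.Gamma x

noncomputable def vlam (γ β ρ δ p q : ℝ) : ℝ :=
  (Real.Gamma β * poch ρ q) / (Real.Gamma (γ + β) * poch δ p)

/-- Truncated V-fractional derivative `D_α f t = λ t^(1-α) f' t`. -/
noncomputable def Dal (γ β ρ δ p q α : ℝ) (f : ℝ → ℝ) : ℝ → ℝ :=
  fun t => vlam γ β ρ δ p q * t ^ (1 - α) * deriv f t

/-- `f` is `k` times α-differentiable. -/
def alphaDiff (γ β ρ δ p q α : ℝ) (k : ℕ) (f : ℝ → ℝ) : Prop :=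
  ∀ j < k, DifferentiableOn ℝ ((Dal γ β ρ δ p q α)^[j] f) (Set.Ioi 0)

/-- V-fractional integral `∫_a^b f dω = λ⁻¹ ∫_a^b f x · x^(α-1) dx`. -/
noncomputable def VInt (γ β ρ δ p q α : ℝ) (a b : ℝ) (f : ℝ → ℝ) : ℝ :=
  (vlam γ β ρ δ p q)⁻¹ * ∫ x in a..b, f x * x ^ (α - 1)

/-- Truncated V-fractional Taylor remainder with `m` terms; `R_{n,f} = Rtay (n+1)`. -/
noncomputable def Rtay (γ β ρ δ p q α : ℝ) (m : ℕ) (f : ℝ → ℝ) (t s : ℝ) : ℝ :=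
  f s - ∑ k ∈ Finset.range m,
    ((Dal γ β ρ δ p q α)^[k] f t / (Nat.factorial k : ℝ)) *
      ((s ^ α - t ^ α) / (vlam γ β ρ δ p q * α)) ^ k

open Function Metric Topology Interval

lemma uIcc_subset_Ioi_zero {a b : ℝ} (ha : 0 < a) (hb : 0 < b) : uIcc a b ⊆ Ioi 0 :=
  fun _ hx => (lt_min ha hb).trans_le hx.1

lemma intervalIntegrable_of_continuousOn_Ioi {g : ℝ → ℝ} {a b : ℝ} (hg : ContinuousOn g (Ioi 0))
    (ha : 0 < a) (hb : 0 < b) : IntervalIntegrable g volume a b :=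
  (hg.mono (uIcc_subset_Ioi_zero ha hb)).intervalIntegrable

section Leibniz

variable {F F' : ℝ → ℝ → ℝ} {s t : ℝ}

theorem hasDerivAt_integral_of_continuousOn_deriv (hs : 0 < s) (ht : 0 < t)
    (hF : ContinuousOn (uncurry F) (Ioi 0 ×ˢ Ioi 0))
    (hF' : ContinuousOn (uncurry F') (Ioi 0 ×ˢ Ioi 0))
    (hderiv : ∀ u > 0, ∀ τ > 0, HasDerivAt (F · τ) (F' u τ) u) :
    HasDerivAt (fun u => ∫ τ in s..t, F u τ) (∫ τ in s..t, F' t τ) t := by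
  have hI : Ι s t ⊆ Ioi 0 := uIoc_subset_uIcc.trans (uIcc_subset_Ioi_zero hs ht)
  have hball : closedBall t (t / 2) ⊆ Ioi 0 := fun u hu => by
    rw [Real.closedBall_eq_Icc] at hu
    exact (half_pos ht).trans_le (by linarith [hu.1])
  obtain ⟨M, hM⟩ : ∃ M, ∀ P ∈ closedBall t (t / 2) ×ˢ uIcc s t, ‖F' P.1 P.2‖ ≤ M :=
    (isCompact_closedBall t _).prod isCompact_uIcc |>.exists_bound_of_continuousOn
      (hF'.mono (prod_mono hball (uIcc_subset_Ioi_zero hs ht)))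
  refine (intervalIntegral.hasDerivAt_integral_of_dominated_loc_of_deriv_le
    (bound := fun _ => M) (ball_mem_nhds t (half_pos ht)) ?_ ?_ ?_ ?_ intervalIntegrable_const ?_).2
  · filter_upwards [Ioi_mem_nhds ht] with u hu
    exact ((hF.uncurry_left u hu).mono hI).aestronglyMeasurable measurableSet_uIoc
  · exact intervalIntegrable_of_continuousOn_Ioi (hF.uncurry_left t ht) hs ht
  · exact ((hF'.uncurry_left t ht).mono hI).aestronglyMeasurable measurableSet_uIoc
  · exact .of_forall fun τ hτ u hu =>
      hM (u, τ) ⟨ball_subset_closedBall hu, uIoc_subset_uIcc hτ⟩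
  · exact .of_forall fun τ hτ u hu =>
      hderiv u (hball (ball_subset_closedBall hu)) τ (hI hτ)

theorem hasDerivAt_integral_diagonal (ht : 0 < t)
    (hF : ContinuousOn (uncurry F) (Ioi 0 ×ˢ Ioi 0)) :
    HasDerivAt (fun u => ∫ τ in t..u, F u τ) (F t t) t := by
  rw [hasDerivAt_iff_isLittleO, Asymptotics.isLittleO_iff]
  intro c hc
  obtain ⟨ε, hε, hFε⟩ := Metric.continuousAt_iff.1
    (hF.continuousAt (prod_mem_nhds (Ioi_mem_nhds ht) (Ioi_mem_nhds ht))) c hc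
  filter_upwards [ball_mem_nhds t (lt_min hε ht)] with u hu
  rw [mem_ball, Real.dist_eq, lt_min_iff] at hu
  have hu0 : 0 < u := by linarith [abs_lt.1 hu.2]
  have hint : IntervalIntegrable (F u) volume t u :=
    intervalIntegrable_of_continuousOn_Ioi (hF.uncurry_left u hu0) ht hu0
  have hclose : ∀ τ ∈ Ι t u, ‖F u τ - F t t‖ ≤ c := fun τ hτ => by
    have hτt : |τ - t| ≤ |u - t| := abs_sub_left_of_mem_uIcc (uIoc_subset_uIcc hτ)
    refine (hFε (x := (u, τ)) ?_).le
    rw [Prod.dist_eq, Real.dist_eq, Real.dist_eq]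
    exact max_lt hu.1 (hτt.trans_lt hu.1)
  calc ‖(∫ τ in t..u, F u τ) - (∫ τ in t..t, F t τ) - (u - t) • F t t‖
      = ‖∫ τ in t..u, (F u τ - F t t)‖ := by
        rw [intervalIntegral.integral_same, intervalIntegral.integral_sub hint
          intervalIntegrable_const, intervalIntegral.integral_const, sub_zero]
    _ ≤ c * |u - t| := intervalIntegral.norm_integral_le_of_norm_le_const hclose
    _ = c * ‖u - t‖ := by rw [Real.norm_eq_abs]

theorem hasDerivAt_integral_upper_param (hs : 0 < s) (ht : 0 < t)
    (hF : ContinuousOn (uncurry F) (Ioi 0 ×ˢ Ioi 0))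
    (hF' : ContinuousOn (uncurry F') (Ioi 0 ×ˢ Ioi 0))
    (hderiv : ∀ u > 0, ∀ τ > 0, HasDerivAt (F · τ) (F' u τ) u) :
    HasDerivAt (fun u => ∫ τ in s..u, F u τ) (F t t + ∫ τ in s..t, F' t τ) t := by
  have hsplit : (fun u => (∫ τ in s..t, F u τ) + ∫ τ in t..u, F u τ)
      =ᶠ[𝓝 t] fun u => ∫ τ in s..u, F u τ := by
    filter_upwards [Ioi_mem_nhds ht] with u hu
    exact intervalIntegral.integral_add_adjacent_intervals
      (intervalIntegrable_of_continuousOn_Ioi (hF.uncurry_left u hu) hs ht)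
      (intervalIntegrable_of_continuousOn_Ioi (hF.uncurry_left u hu) ht hu)
  rw [add_comm]
  exact ((hasDerivAt_integral_of_continuousOn_deriv hs ht hF hF' hderiv).add
    (hasDerivAt_integral_diagonal ht hF)).congr_of_eventuallyEq hsplit.symm

end Leibniz

lemma poch_pos {x y : ℝ} (hx : 0 < x) (hxy : 0 < x + y) : 0 < poch x y :=
  div_pos (Gamma_pos_of_pos hxy) (Gamma_pos_of_pos hx)

lemma vlam_pos {γ β ρ δ p q : ℝ} (hγ : 0 < γ) (hβ : 0 < β) (hρ : 0 < ρ) (hδ : 0 < δ)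
    (hp : 0 < p) (hq : 0 < q) : 0 < vlam γ β ρ δ p q :=
  div_pos (mul_pos (Gamma_pos_of_pos hβ) (poch_pos hρ (by linarith)))
    (mul_pos (Gamma_pos_of_pos (by linarith)) (poch_pos hδ (by linarith)))

section VFractional

variable {γ β ρ δ p q α : ℝ}

local notation "𝒟" => Dal γ β ρ δ p q α

local notation "ℓ" => vlam γ β ρ δ p q

lemma Dal_eqOn_of_eqOn {g₁ g₂ : ℝ → ℝ} (h : EqOn g₁ g₂ (Ioi 0)) :
    EqOn (𝒟 g₁) (𝒟 g₂) (Ioi 0) := fun t ht => by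
  simp only [Dal, (h.eventuallyEq_of_mem (Ioi_mem_nhds ht)).deriv_eq]

lemma hasDerivAt_of_Dal (hℓ : ℓ ≠ 0) {g : ℝ → ℝ} {u : ℝ} (hu : 0 < u)
    (hg : DifferentiableAt ℝ g u) : HasDerivAt g ((ℓ * u ^ (1 - α))⁻¹ * 𝒟 g u) u := by
  have hval : (ℓ * u ^ (1 - α))⁻¹ * 𝒟 g u = deriv g u :=
    inv_mul_cancel_left₀ (mul_ne_zero hℓ (rpow_pos_of_pos hu _).ne') _
  exact hval ▸ hg.hasDerivAt

lemma VInt_self (a : ℝ) (g : ℝ → ℝ) : VInt γ β ρ δ p q α a a g = 0 := by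
  simp [VInt]

lemma VInt_eq_zero {a b : ℝ} {g : ℝ → ℝ} (hg : EqOn g 0 (uIcc a b)) :
    VInt γ β ρ δ p q α a b g = 0 := by
  have hzero : EqOn (fun x => g x * x ^ (α - 1)) 0 (uIcc a b) := fun x hx => by
    simp [hg hx]
  simp [VInt, intervalIntegral.integral_congr hzero]

lemma VInt_add_sum_mul {ι : Type*} {a b : ℝ} (ha : 0 < a) (hb : 0 < b) (S : Finset ι)
    (c : ι → ℝ) {g₀ : ℝ → ℝ} {g : ι → ℝ → ℝ} (hg₀ : ContinuousOn g₀ (Ioi 0))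
    (hg : ∀ i ∈ S, ContinuousOn (g i) (Ioi 0)) :
    VInt γ β ρ δ p q α a b g₀ + ∑ i ∈ S, c i * VInt γ β ρ δ p q α a b (g i)
      = VInt γ β ρ δ p q α a b (fun x => g₀ x + ∑ i ∈ S, c i * g i x) := by
  have hweight : ContinuousOn (fun x : ℝ => x ^ (α - 1)) (Ioi 0) :=
    continuousOn_id.rpow_const fun x hx => Or.inl (ne_of_gt hx)
  have hint : ∀ {h : ℝ → ℝ}, ContinuousOn h (Ioi 0) →
      IntervalIntegrable (fun x => h x * x ^ (α - 1)) volume a b :=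
    fun hh => intervalIntegrable_of_continuousOn_Ioi (hh.mul hweight) ha hb
  have hterm : ∀ i ∈ S, IntervalIntegrable (fun x => c i * (g i x * x ^ (α - 1))) volume a b :=
    fun i hi => (hint (hg i hi)).const_mul (c i)
  simp only [VInt, add_mul, Finset.sum_mul, mul_assoc]
  rw [intervalIntegral.integral_add (hint hg₀)
    (by simpa only [Finset.sum_fn] using IntervalIntegrable.sum S hterm),
    intervalIntegral.integral_finsetSum hterm]
  simp only [intervalIntegral.integral_const_mul, mul_add, Finset.mul_sum, mul_left_comm]

theorem Dal_VInt_eq (hℓ : ℓ ≠ 0) {K : ℝ → ℝ → ℝ} {w : ℝ → ℝ} {s t : ℝ} (hs : 0 < s) (ht : 0 < t)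
    (hK : ContinuousOn (uncurry K) (Ioi 0 ×ˢ Ioi 0))
    (hKdiff : ∀ τ > 0, DifferentiableOn ℝ (K · τ) (Ioi 0))
    (hDK : ContinuousOn (fun P : ℝ × ℝ => 𝒟 (K · P.2) P.1) (Ioi 0 ×ˢ Ioi 0))
    (hw : ContinuousOn w (Ioi 0)) :
    𝒟 (fun u => VInt γ β ρ δ p q α s u (fun τ => K u τ * w τ)) t
      = K t t * w t + VInt γ β ρ δ p q α s t (fun τ => 𝒟 (K · τ) t * w τ) := by
  have hscale : ContinuousOn (fun u : ℝ => (ℓ * u ^ (1 - α))⁻¹) (Ioi 0) :=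
    (continuousOn_const.mul (continuousOn_id.rpow_const fun u hu => Or.inl (ne_of_gt hu))).inv₀
      fun u hu => mul_ne_zero hℓ (rpow_pos_of_pos hu _).ne'
  have hweight : ContinuousOn (fun τ : ℝ => w τ * τ ^ (α - 1)) (Ioi 0) :=
    hw.mul (continuousOn_id.rpow_const fun τ hτ => Or.inl (ne_of_gt hτ))
  have hleibniz := hasDerivAt_integral_upper_param
    (F := fun u τ => K u τ * (w τ * τ ^ (α - 1)))
    (F' := fun u τ => (ℓ * u ^ (1 - α))⁻¹ * (𝒟 (K · τ) u * (w τ * τ ^ (α - 1)))) hs ht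
    (hK.mul (hweight.comp continuousOn_snd fun P hP => hP.2))
    ((hscale.comp continuousOn_fst fun P hP => hP.1).mul
      (hDK.mul (hweight.comp continuousOn_snd fun P hP => hP.2)))
    fun u hu τ hτ => by
      simpa only [mul_assoc] using (hasDerivAt_of_Dal hℓ hu
        ((hKdiff τ hτ).differentiableAt (Ioi_mem_nhds hu))).mul_const (w τ * τ ^ (α - 1))
  simp only [VInt, mul_assoc] at hleibniz ⊢
  rw [show 𝒟 _ t = ℓ * t ^ (1 - α) * deriv _ t from rfl, (hleibniz.const_mul ℓ⁻¹).deriv,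
    intervalIntegral.integral_const_mul]
  have ht' : t ^ (1 - α) * t ^ (α - 1) = 1 := by
    rw [← rpow_add ht]; simp
  field_simp
  linear_combination ℓ * K t t * w t * ht'

end VFractional

section VariationOfConstants

variable {γ β ρ δ p q α : ℝ} {n : ℕ} {s : ℝ} {yC : ℝ → ℝ → ℝ} {f : ℝ → ℝ}

local notation "𝒟" => Dal γ β ρ δ p q α

lemma Dal_VInt_iterate_eq (hℓ : vlam γ β ρ δ p q ≠ 0) (hs : 0 < s)
    (hyCdiff : ∀ σ > (0 : ℝ), alphaDiff γ β ρ δ p q α n (fun t => yC t σ))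
    (hyCc : ∀ j ≤ n, ContinuousOn
      (fun P : ℝ × ℝ => 𝒟^[j] (fun t => yC t P.2) P.1) (Ioi 0 ×ˢ Ioi 0))
    (hf : ContinuousOn f (Ioi 0)) {j : ℕ} (hj : j < n) {t : ℝ} (ht : 0 < t) :
    𝒟 (fun u => VInt γ β ρ δ p q α s u (fun τ => 𝒟^[j] (yC · τ) u * f τ)) t
      = 𝒟^[j] (yC · t) t * f t
        + VInt γ β ρ δ p q α s t (fun τ => 𝒟^[j + 1] (yC · τ) t * f τ) := by
  simp only [iterate_succ_apply']
  exact Dal_VInt_eq hℓ (K := fun u τ => 𝒟^[j] (yC · τ) u) hs ht (hyCc j hj.le)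
    (fun τ hτ => hyCdiff τ hτ j hj) (by simpa only [iterate_succ_apply'] using hyCc (j + 1) hj) hf

lemma Dal_iterate_VInt_eqOn_of_lt (hℓ : vlam γ β ρ δ p q ≠ 0) (hs : 0 < s)
    (hyCdiff : ∀ σ > (0 : ℝ), alphaDiff γ β ρ δ p q α n (fun t => yC t σ))
    (hyC0 : ∀ σ > (0 : ℝ), ∀ j : ℕ, j + 2 ≤ n → 𝒟^[j] (fun t => yC t σ) σ = 0)
    (hyCc : ∀ j ≤ n, ContinuousOn
      (fun P : ℝ × ℝ => 𝒟^[j] (fun t => yC t P.2) P.1) (Ioi 0 ×ˢ Ioi 0))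
    (hf : ContinuousOn f (Ioi 0)) :
    ∀ j < n, EqOn (𝒟^[j] (fun t => VInt γ β ρ δ p q α s t (fun τ => yC t τ * f τ)))
      (fun t => VInt γ β ρ δ p q α s t (fun τ => 𝒟^[j] (yC · τ) t * f τ)) (Ioi 0)
  | 0, _ => fun _ _ => rfl
  | j + 1, hj => fun t ht => by
    rw [iterate_succ_apply', Dal_eqOn_of_eqOn
      (Dal_iterate_VInt_eqOn_of_lt hℓ hs hyCdiff hyC0 hyCc hf j (by omega)) ht,
      Dal_VInt_iterate_eq hℓ hs hyCdiff hyCc hf (by omega) ht, hyC0 t ht j (by omega),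
      zero_mul, zero_add]

lemma Dal_iterate_VInt_eqOn (hn : 1 ≤ n) (hℓ : vlam γ β ρ δ p q ≠ 0) (hs : 0 < s)
    (hyCdiff : ∀ σ > (0 : ℝ), alphaDiff γ β ρ δ p q α n (fun t => yC t σ))
    (hyC0 : ∀ σ > (0 : ℝ), ∀ j : ℕ, j + 2 ≤ n → 𝒟^[j] (fun t => yC t σ) σ = 0)
    (hyC1 : ∀ σ > (0 : ℝ), 𝒟^[n - 1] (fun t => yC t σ) σ = 1)
    (hyCc : ∀ j ≤ n, ContinuousOn
      (fun P : ℝ × ℝ => 𝒟^[j] (fun t => yC t P.2) P.1) (Ioi 0 ×ˢ Ioi 0))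
    (hf : ContinuousOn f (Ioi 0)) :
    EqOn (𝒟^[n] (fun t => VInt γ β ρ δ p q α s t (fun τ => yC t τ * f τ)))
      (fun t => f t + VInt γ β ρ δ p q α s t (fun τ => 𝒟^[n] (yC · τ) t * f τ)) (Ioi 0) := by
  obtain ⟨m, rfl⟩ : ∃ m, n = m + 1 := ⟨n - 1, by omega⟩
  intro t ht
  rw [iterate_succ_apply', Dal_eqOn_of_eqOn
    (Dal_iterate_VInt_eqOn_of_lt hℓ hs hyCdiff hyC0 hyCc hf m (by omega)) ht,
    Dal_VInt_iterate_eq hℓ hs hyCdiff hyCc hf (by omega) ht, ← Nat.add_sub_cancel m 1,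
    hyC1 t ht, one_mul]

end VariationOfConstants

theorem stmt2_general (γ β ρ δ p q α : ℝ) (hγ : 0 < γ) (hβ : 0 < β) (hρ : 0 < ρ) (hδ : 0 < δ)
    (hp : 0 < p) (hq : 0 < q)
    (n : ℕ) (hn : 1 ≤ n)
    (r : ℕ → ℝ → ℝ)
    (L : (ℝ → ℝ) → ℝ → ℝ)
    (hL : ∀ g : ℝ → ℝ, ∀ t : ℝ,
      L g t = (Dal γ β ρ δ p q α)^[n] g t + ∑ j ∈ Finset.Icc 1 n, r j t * (Dal γ β ρ δ p q α)^[n - j] g t)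
    (s : ℝ) (hs : 0 < s)
    (yC : ℝ → ℝ → ℝ)
    (hyCdiff : ∀ σ > (0 : ℝ), alphaDiff γ β ρ δ p q α n (fun t => yC t σ))
    (hyCL : ∀ σ > (0 : ℝ), ∀ t > (0 : ℝ), L (fun t => yC t σ) t = 0)
    (hyC0 : ∀ σ > (0 : ℝ), ∀ j : ℕ, j + 2 ≤ n → (Dal γ β ρ δ p q α)^[j] (fun t => yC t σ) σ = 0)
    (hyC1 : ∀ σ > (0 : ℝ), (Dal γ β ρ δ p q α)^[n - 1] (fun t => yC t σ) σ = 1)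
    (hyCc : ∀ j ≤ n, ContinuousOn
      (fun P : ℝ × ℝ => (Dal γ β ρ δ p q α)^[j] (fun t => yC t P.2) P.1) (Set.Ioi 0 ×ˢ Set.Ioi 0))
    (f : ℝ → ℝ) (hf : ContinuousOn f (Set.Ioi 0))
    (y : ℝ → ℝ)
    (hy : ∀ t : ℝ, y t = VInt γ β ρ δ p q α s t (fun τ => yC t τ * f τ)) :
    (∀ t > (0 : ℝ), L y t = f t) ∧
    (∀ j < n, (Dal γ β ρ δ p q α)^[j] y s = 0) := by
  have hℓ := (vlam_pos hγ hβ hρ hδ hp hq).ne'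
  obtain rfl : y = fun t => VInt γ β ρ δ p q α s t (fun τ => yC t τ * f τ) := funext hy
  have hlow := Dal_iterate_VInt_eqOn_of_lt hℓ hs hyCdiff hyC0 hyCc hf
  have hslice : ∀ j ≤ n, ∀ t > (0 : ℝ),
      ContinuousOn (fun τ => (Dal γ β ρ δ p q α)^[j] (yC · τ) t * f τ) (Ioi 0) :=
    fun j hj t ht => ((hyCc j hj).uncurry_left
      (f := fun t τ => (Dal γ β ρ δ p q α)^[j] (yC · τ) t) t ht).mul hf
  refine ⟨fun t ht => ?_, fun j hj => (hlow j hj hs).trans (VInt_self _ _)⟩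
  rw [hL, Dal_iterate_VInt_eqOn hn hℓ hs hyCdiff hyC0 hyC1 hyCc hf ht,
    Finset.sum_congr rfl fun j hj => by rw [hlow (n - j) (by grind) ht],
    add_assoc, VInt_add_sum_mul hs ht _ _ (hslice n le_rfl t ht)
      fun j _ => hslice (n - j) (by omega) t ht, add_eq_left]
  refine VInt_eq_zero fun τ hτ => ?_
  have hLτ := hyCL τ (uIcc_subset_Ioi_zero hs ht hτ) t ht
  rw [hL] at hLτ
  simp [← mul_assoc, ← Finset.sum_mul, ← add_mul, hLτ]

theorem stmt2 (γ β ρ δ p q α : ℝ) (hγ : 0 < γ) (hβ : 0 < β) (hρ : 0 < ρ) (hδ : 0 < δ)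
    (hp : 0 < p) (hq : 0 < q) (hα : 0 < α) (hα1 : α ≤ 1)
    (n : ℕ) (hn : 1 ≤ n)
    (r : ℕ → ℝ → ℝ) (hr : ∀ j, 1 ≤ j → j ≤ n → ContinuousOn (r j) (Set.Ioi 0))
    (L : (ℝ → ℝ) → ℝ → ℝ)
    (hL : ∀ g : ℝ → ℝ, ∀ t : ℝ,
      L g t = (Dal γ β ρ δ p q α)^[n] g t + ∑ j ∈ Finset.Icc 1 n, r j t * (Dal γ β ρ δ p q α)^[n - j] g t)
    (s : ℝ) (hs : 0 < s)
    (yC : ℝ → ℝ → ℝ)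
    (hyCdiff : ∀ σ > (0 : ℝ), alphaDiff γ β ρ δ p q α n (fun t => yC t σ))
    (hyCL : ∀ σ > (0 : ℝ), ∀ t > (0 : ℝ), L (fun t => yC t σ) t = 0)
    (hyC0 : ∀ σ > (0 : ℝ), ∀ j : ℕ, j + 2 ≤ n → (Dal γ β ρ δ p q α)^[j] (fun t => yC t σ) σ = 0)
    (hyC1 : ∀ σ > (0 : ℝ), (Dal γ β ρ δ p q α)^[n - 1] (fun t => yC t σ) σ = 1)
    (hyCc : ∀ j ≤ n, ContinuousOn
      (fun P : ℝ × ℝ => (Dal γ β ρ δ p q α)^[j] (fun t => yC t P.2) P.1) (Set.Ioi 0 ×ˢ Set.Ioi 0))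
    (f : ℝ → ℝ) (hf : ContinuousOn f (Set.Ioi 0))
    (y : ℝ → ℝ)
    (hy : ∀ t : ℝ, y t = VInt γ β ρ δ p q α s t (fun τ => yC t τ * f τ)) :
    (∀ t > (0 : ℝ), L y t = f t) ∧
    (∀ j < n, (Dal γ β ρ δ p q α)^[j] y s = 0) :=
  stmt2_general γ β ρ δ p q α hγ hβ hρ hδ hp hq n hn r L hL s hs yC hyCdiff hyCL hyC0 hyC1 hyCc f hf
    y hy
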